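/- At every minimizer (t*, p*, y*) of the joint routing problem, for every node n and any two data paths F and G that both start at n, each end at a destination node, and have p*_l > 0 and t*_l > 0 on every link, the path sums are equal: ∑_{l∈F} (1/2)·ln(1 + p*_l/σ_l) · ((1/2)·ln(1 + p*_l/σ_l) − t*_l)^{−2} = ∑_{l∈G} (1/2)·ln(1 + p*_l/σ_l) · ((1/2)·ln(1 + p*_l/σ_l) − t*_l)^{−2}. -/

import Mathlib

open BigOperators ENNReal

/-!
Shift `ε` units of flow from `F` onto `G`, i.e. add `ε • (count_G − count_F)` to `t*`. Both paths
leave `n` and end at destinations, so the shift is a circulation at every non-destination node and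
flow conservation survives; since `0 < t* < c := (1/2)·ln(1 + p*/σ)` on every link it touches,
`(t* + ε • (count_G − count_F), p*, y*)` stays feasible for small `|ε|`. There the delay is the
smooth function `∑ τ / (c − τ)`, with derivative `∑_G c/(c − t*)² − ∑_F c/(c − t*)²` at `ε = 0`,
which must vanish at a minimizer.
-/

/-- The joint routing problem: nodes `N`, data links `L` (start node, end node, noise
power `σ l > 0`), energy links `Q` (start node, end node, efficiency `α q ∈ (0,1]`),
harvested energies `E n ≥ 0`, designated destination nodes `dest`, and exogenous
arrivals `s n ≥ 0` at non-destination nodes. -/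
structure JNet where
  N : Type
  L : Type
  Q : Type
  [fintypeN : Fintype N]
  [fintypeL : Fintype L]
  [fintypeQ : Fintype Q]
  [decEqN : DecidableEq N]
  startD : L → N
  endD : L → N
  startE : Q → N
  endE : Q → N
  α : Q → ℝ
  σ : L → ℝ
  E : N → ℝ
  dest : N → Prop
  [decDest : DecidablePred dest]
  s : N → ℝ
  hα : ∀ q, 0 < α q ∧ α q ≤ 1
  hσ : ∀ l, 0 < σ l
  hE : ∀ n, 0 ≤ E n
  hs : ∀ n, ¬ dest n → 0 ≤ s n

attribute [instance] JNet.fintypeN JNet.fintypeL JNet.fintypeQ JNet.decEqN JNet.decDest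

/-- A triple `(t, p, y)` is feasible: nonnegative flows, capacity constraints
`p_l ≥ σ_l (e^{2 t_l} − 1)`, nonnegative energy transfers, the energy constraint at
every node, and flow conservation at every non-destination node. -/
def JNet.Feasible (net : JNet) (t p : net.L → ℝ) (y : net.Q → ℝ) : Prop :=
  (∀ l, 0 ≤ t l) ∧
  (∀ l, net.σ l * (Real.exp (2 * t l) - 1) ≤ p l) ∧
  (∀ q, 0 ≤ y q) ∧
  (∀ n : net.N,
    (∑ l ∈ Finset.univ.filter (fun l => net.startD l = n), p l) +
      (∑ q ∈ Finset.univ.filter (fun q => net.startE q = n), y q) ≤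
    net.E n + ∑ q ∈ Finset.univ.filter (fun q => net.endE q = n), net.α q * y q) ∧
  (∀ n : net.N, ¬ net.dest n →
    (∑ l ∈ Finset.univ.filter (fun l => net.startD l = n), t l) -
      (∑ l ∈ Finset.univ.filter (fun l => net.endD l = n), t l) = net.s n)

/-- The delay `h(p, t) = t / ((1/2)·ln(1 + p/σ) − t)` on a single link, taken to
be `0` when `t = 0` and `+∞` when `t > 0` and `(1/2)·ln(1 + p/σ) ≤ t`. -/
noncomputable def linkDelay (σ p t : ℝ) : ℝ≥0∞ :=
  if t = 0 then 0
  else if t < (1 / 2) * Real.log (1 + p / σ) then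
    ENNReal.ofReal (t / ((1 / 2) * Real.log (1 + p / σ) - t))
  else ⊤

/-- The network delay `D(t, p) = ∑_l h_l(p_l, t_l)`. -/
noncomputable def JNet.Delay (net : JNet) (t p : net.L → ℝ) : ℝ≥0∞ :=
  ∑ l, linkDelay (net.σ l) (p l) (t l)

/-- A minimizer of the joint routing problem: a feasible triple with finite delay
minimizing the delay over all feasible triples. -/
def JNet.IsMinimizer (net : JNet) (t p : net.L → ℝ) (y : net.Q → ℝ) : Prop :=
  net.Feasible t p y ∧ net.Delay t p < ⊤ ∧
    ∀ t' p' y', net.Feasible t' p' y' → net.Delay t p ≤ net.Delay t' p'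

/-- The marginal quantity
`g(p) = (t/(2σ)) · ((1/2)·ln(1 + p/σ) − t)^{−2} · (1 + p/σ)^{−1}`, with the
convention that it is `0` when `t = 0`. -/
noncomputable def gMargJ (t σ p : ℝ) : ℝ :=
  if t = 0 then 0
  else t / (2 * σ) / ((1 / 2) * Real.log (1 + p / σ) - t) ^ 2 / (1 + p / σ)

/-- A data path from node `a` to a destination: a nonempty finite sequence of data
links starting at `a`, consecutively matched, and ending at a destination node. -/
def JNet.IsDataPath (net : JNet) (a : net.N) (P : List net.L) : Prop :=
  ∃ hne : P ≠ [],
    net.startD (P.head hne) = a ∧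
    net.dest (net.endD (P.getLast hne)) ∧
    P.Chain' (fun l₁ l₂ => net.endD l₁ = net.startD l₂)

open Filter Topology

theorem List.map_append_getLast_eq_cons_map {α β : Type*} {s e : α → β} {P : List α}
    (hne : P ≠ []) (hP : P.IsChain fun a b => e a = s b) :
    P.map s ++ [e (P.getLast hne)] = s (P.head hne) :: P.map e := by
  induction P with
  | nil => exact absurd rfl hne
  | cons x P ih =>
    cases P with
    | nil => rfl
    | cons y P =>
      obtain ⟨hxy, hP⟩ := List.isChain_cons_cons.mp hP
      simp only [List.map_cons, List.cons_append, List.getLast_cons (List.cons_ne_nil y P),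
        List.head_cons] at ih ⊢
      rw [ih (List.cons_ne_nil y P) hP, hxy]

section Flows

variable {L N : Type*} [Fintype L] [DecidableEq N]

theorem sum_count_mul_eq_sum_map [DecidableEq L] (P : List L) (w : L → ℝ) :
    ∑ l, (P.count l : ℝ) * w l = (P.map w).sum := by
  rw [Finset.sum_list_map_count, ← Finset.sum_subset (Finset.subset_univ P.toFinset)]
  · simp only [nsmul_eq_mul]
  · intro l _ hl
    rw [List.count_eq_zero.mpr (mt List.mem_toFinset.mpr hl), Nat.cast_zero, zero_mul]

theorem sum_filter_count_eq_count_map [DecidableEq L] (f : L → N) (P : List L) (n : N) :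
    ∑ l with f l = n, (P.count l : ℝ) = (P.map f).count n := by
  induction P with
  | nil => simp
  | cons x P ih =>
    simp only [List.count_cons, List.map_cons, beq_iff_eq, Nat.cast_add, Finset.sum_add_distrib, ih]
    simp [eq_comm]

def netOutflow (s e : L → N) (f : L → ℝ) (n : N) : ℝ :=
  ∑ l with s l = n, f l - ∑ l with e l = n, f l

theorem netOutflow_add_mul (s e : L → N) (f d : L → ℝ) (ε : ℝ) (n : N) :
    netOutflow s e (fun l => f l + ε * d l) n = netOutflow s e f n + ε * netOutflow s e d n := by
  simp only [netOutflow, Finset.sum_add_distrib, ← Finset.mul_sum]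
  ring

theorem netOutflow_sub (s e : L → N) (f g : L → ℝ) (n : N) :
    netOutflow s e (fun l => f l - g l) n = netOutflow s e f n - netOutflow s e g n := by
  simp only [netOutflow, Finset.sum_sub_distrib]
  ring

theorem netOutflow_count_of_isChain [DecidableEq L] {s e : L → N} {P : List L} (hne : P ≠ [])
    (hP : P.IsChain fun a b => e a = s b) (n : N) :
    netOutflow s e (fun l => (P.count l : ℝ)) n =
      (if s (P.head hne) = n then 1 else 0) - (if e (P.getLast hne) = n then 1 else 0) := by
  have h := congrArg (fun P => ((P.count n : ℕ) : ℝ)) (P.map_append_getLast_eq_cons_map hne hP)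
  simp only [List.count_append, List.count_cons, List.count_nil, beq_iff_eq] at h
  push_cast at h
  rw [netOutflow, sum_filter_count_eq_count_map, sum_filter_count_eq_count_map]
  linarith

end Flows

theorem hasDerivAt_div_sub_affine {t d c : ℝ} (h : d = 0 ∨ t ≠ c) :
    HasDerivAt (fun ε => (t + ε * d) / (c - (t + ε * d))) (d * (c / (c - t) ^ 2)) 0 := by
  rcases h with rfl | htc
  · simpa using hasDerivAt_const (0 : ℝ) (t / (c - t))
  have hline : HasDerivAt (fun ε : ℝ => t + ε * d) d 0 := by
    simpa using ((hasDerivAt_id (0 : ℝ)).mul_const d).const_add t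
  have hc : c - (t + 0 * d) ≠ 0 := by simpa [sub_eq_zero] using htc.symm
  have hct : c - t ≠ 0 := sub_ne_zero.mpr htc.symm
  have hval : d * (c / (c - t) ^ 2) =
      (d * (c - (t + 0 * d)) - (t + 0 * d) * -d) / (c - (t + 0 * d)) ^ 2 := by
    rw [zero_mul, add_zero]
    field_simp
    ring
  rw [hval]
  exact hline.fun_div (hline.const_sub c) hc

theorem eventually_eq_zero_or_mem_Ioo {t d c : ℝ} (h : (t = 0 ∧ d = 0) ∨ (0 < t ∧ t < c)) :
    ∀ᶠ ε in 𝓝 (0 : ℝ), t + ε * d = 0 ∨ (0 < t + ε * d ∧ t + ε * d < c) := by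
  rcases h with ⟨rfl, rfl⟩ | ⟨h0, hc⟩
  · exact Eventually.of_forall fun ε => by simp
  · have hcont : Continuous fun ε : ℝ => t + ε * d := by fun_prop
    have hIoo : Set.Ioo 0 c ∈ 𝓝 (t + 0 * d) := Ioo_mem_nhds (by simpa using h0) (by simpa using hc)
    exact (hcont.continuousAt.eventually_mem hIoo).mono fun ε hε => Or.inr hε

noncomputable def linkCapacity (σ p : ℝ) : ℝ := 1 / 2 * Real.log (1 + p / σ)

theorem linkDelay_eq_ofReal {σ p t : ℝ} (h : t = 0 ∨ (0 < t ∧ t < linkCapacity σ p)) :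
    linkDelay σ p t = ENNReal.ofReal (t / (linkCapacity σ p - t)) := by
  rcases h with rfl | ⟨h0, hc⟩
  · simp [linkDelay]
  · rw [linkCapacity] at hc ⊢
    rw [linkDelay, if_neg h0.ne', if_pos hc]

theorem lt_linkCapacity_of_linkDelay_ne_top {σ p t : ℝ} (h : linkDelay σ p t ≠ ⊤) (ht : 0 < t) :
    t < linkCapacity σ p := by
  rw [linkCapacity]
  by_contra hc
  exact h (by rw [linkDelay, if_neg ht.ne', if_neg hc])

theorem mul_exp_sub_one_le_of_le_linkCapacity {σ p t : ℝ} (hσ : 0 < σ) (hp : 0 ≤ p)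
    (h : t ≤ linkCapacity σ p) : σ * (Real.exp (2 * t) - 1) ≤ p := by
  have hexp : Real.exp (2 * t) ≤ 1 + p / σ := by
    calc Real.exp (2 * t) ≤ Real.exp (Real.log (1 + p / σ)) := by
          rw [Real.exp_le_exp]
          rw [linkCapacity] at h
          linarith
      _ = 1 + p / σ := Real.exp_log (by positivity)
  calc σ * (Real.exp (2 * t) - 1) ≤ σ * (p / σ) := by gcongr; linarith
    _ = p := mul_div_cancel₀ p hσ.ne'

theorem div_sub_nonneg_of_eq_zero_or_mem_Ioo {t c : ℝ} (h : t = 0 ∨ (0 < t ∧ t < c)) :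
    0 ≤ t / (c - t) := by
  rcases h with rfl | ⟨h0, hc⟩
  · simp
  · exact div_nonneg h0.le (sub_nonneg.mpr hc.le)

namespace JNet

variable {net : JNet} {t p : net.L → ℝ} {y : net.Q → ℝ}

theorem Feasible.power_nonneg (hf : net.Feasible t p y) (l : net.L) : 0 ≤ p l := by
  have hexp : 1 ≤ Real.exp (2 * t l) := Real.one_le_exp (by linarith [hf.1 l])
  nlinarith [hf.2.1 l, net.hσ l]

theorem Feasible.add_mul_circulation (hf : net.Feasible t p y) {d : net.L → ℝ} {ε : ℝ}
    (hd : ∀ n, ¬ net.dest n → netOutflow net.startD net.endD d n = 0)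
    (hε : ∀ l, t l + ε * d l = 0 ∨
      (0 < t l + ε * d l ∧ t l + ε * d l < linkCapacity (net.σ l) (p l))) :
    net.Feasible (fun l => t l + ε * d l) p y := by
  have hp := hf.power_nonneg
  obtain ⟨-, -, hy, hE, hcons⟩ := hf
  refine ⟨fun l => ?_, fun l => ?_, hy, hE, fun n hn => ?_⟩
  · rcases hε l with h | ⟨h0, -⟩
    · exact h.ge
    · exact h0.le
  · rcases hε l with h | ⟨-, hc⟩
    · simp only [h, mul_zero, Real.exp_zero, sub_self]
      exact hp l
    · exact mul_exp_sub_one_le_of_le_linkCapacity (net.hσ l) (hp l) hc.le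
  · have h := netOutflow_add_mul net.startD net.endD t d ε n
    rw [hd n hn, mul_zero, add_zero] at h
    exact h.trans (hcons n hn)

theorem delay_eq_ofReal {τ : net.L → ℝ}
    (h : ∀ l, τ l = 0 ∨ (0 < τ l ∧ τ l < linkCapacity (net.σ l) (p l))) :
    net.Delay τ p = ENNReal.ofReal (∑ l, τ l / (linkCapacity (net.σ l) (p l) - τ l)) := by
  rw [ENNReal.ofReal_sum_of_nonneg fun l _ => div_sub_nonneg_of_eq_zero_or_mem_Ioo (h l)]
  exact Finset.sum_congr rfl fun l _ => linkDelay_eq_ofReal (h l)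

theorem IsMinimizer.lt_linkCapacity (hmin : net.IsMinimizer t p y) {l : net.L} (ht : 0 < t l) :
    t l < linkCapacity (net.σ l) (p l) :=
  lt_linkCapacity_of_linkDelay_ne_top ((ENNReal.sum_lt_top.mp hmin.2.1) l (Finset.mem_univ l)).ne ht

theorem IsMinimizer.isLocalMin_add_mul_circulation (hmin : net.IsMinimizer t p y)
    {d : net.L → ℝ} (hd : ∀ n, ¬ net.dest n → netOutflow net.startD net.endD d n = 0)
    (hdt : ∀ l, d l ≠ 0 → 0 < t l) :
    IsLocalMin (fun ε => ∑ l, (t l + ε * d l) /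
      (linkCapacity (net.σ l) (p l) - (t l + ε * d l))) 0 := by
  have ⟨hf, _, hopt⟩ := hmin
  have hdir : ∀ l, (t l = 0 ∧ d l = 0) ∨ (0 < t l ∧ t l < linkCapacity (net.σ l) (p l)) := by
    intro l
    rcases (hf.1 l).eq_or_lt with ht | ht
    · exact Or.inl ⟨ht.symm, by_contra fun hdl => (hdt l hdl).ne' ht.symm⟩
    · exact Or.inr ⟨ht, hmin.lt_linkCapacity ht⟩
  have ht : ∀ l, t l = 0 ∨ (0 < t l ∧ t l < linkCapacity (net.σ l) (p l)) :=
    fun l => (hdir l).imp And.left id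
  filter_upwards [eventually_all.mpr fun l => eventually_eq_zero_or_mem_Ioo (hdir l)] with ε hε
  have hle := hopt _ p y (hf.add_mul_circulation hd hε)
  rw [delay_eq_ofReal ht, delay_eq_ofReal hε, ENNReal.ofReal_le_ofReal_iff
    (Finset.sum_nonneg fun l _ => div_sub_nonneg_of_eq_zero_or_mem_Ioo (hε l))] at hle
  simpa only [zero_mul, add_zero] using hle

theorem IsMinimizer.sum_mul_marginal_eq_zero (hmin : net.IsMinimizer t p y)
    {d : net.L → ℝ} (hd : ∀ n, ¬ net.dest n → netOutflow net.startD net.endD d n = 0)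
    (hdt : ∀ l, d l ≠ 0 → 0 < t l) :
    ∑ l, d l * (linkCapacity (net.σ l) (p l) / (linkCapacity (net.σ l) (p l) - t l) ^ 2) = 0 := by
  refine (hmin.isLocalMin_add_mul_circulation hd hdt).hasDerivAt_eq_zero
    (HasDerivAt.fun_sum fun l _ => hasDerivAt_div_sub_affine ?_)
  by_cases hdl : d l = 0
  · exact Or.inl hdl
  · exact Or.inr (hmin.lt_linkCapacity (hdt l hdl)).ne

theorem IsDataPath.netOutflow_count [DecidableEq net.L] {n m : net.N} {P : List net.L}
    (hP : net.IsDataPath n P) (hm : ¬ net.dest m) :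
    netOutflow net.startD net.endD (fun l => (P.count l : ℝ)) m = if n = m then 1 else 0 := by
  obtain ⟨hne, hstart, hdest, hchain⟩ := hP
  have hend : net.endD (P.getLast hne) ≠ m := fun h => hm (h ▸ hdest)
  rw [netOutflow_count_of_isChain hne hchain, hstart, if_neg hend, sub_zero]

end JNet

/-- At every minimizer `(t*, p*, y*)` of the joint routing problem, for
every node `n` and any two data paths `F, G` starting at `n`, ending at destination
nodes, and with `p*_l > 0` and `t*_l > 0` on every link, the path sums
`∑_{l∈path} (1/2)·ln(1 + p*_l/σ_l) · ((1/2)·ln(1 + p*_l/σ_l) − t*_l)^{−2}` coincide. -/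
theorem joint_minimizer_path_sums_equal (net : JNet)
    (tstar pstar : net.L → ℝ) (ystar : net.Q → ℝ)
    (hmin : net.IsMinimizer tstar pstar ystar) :
    ∀ (n : net.N) (F G : List net.L),
      net.IsDataPath n F → net.IsDataPath n G →
      (∀ l ∈ F, 0 < pstar l ∧ 0 < tstar l) →
      (∀ l ∈ G, 0 < pstar l ∧ 0 < tstar l) →
      (F.map fun l => (1 / 2) * Real.log (1 + pstar l / net.σ l) /
          ((1 / 2) * Real.log (1 + pstar l / net.σ l) - tstar l) ^ 2).sum =
      (G.map fun l => (1 / 2) * Real.log (1 + pstar l / net.σ l) /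
          ((1 / 2) * Real.log (1 + pstar l / net.σ l) - tstar l) ^ 2).sum := by
  classical
  intro n F G hF hG hFpos hGpos
  have hcirc : ∀ m, ¬ net.dest m →
      netOutflow net.startD net.endD (fun l => (G.count l : ℝ) - F.count l) m = 0 := by
    intro m hm
    rw [netOutflow_sub, hG.netOutflow_count hm, hF.netOutflow_count hm, sub_self]
  have hsupp : ∀ l, (G.count l : ℝ) - F.count l ≠ 0 → 0 < tstar l := by
    intro l hl
    by_cases hlG : l ∈ G
    · exact (hGpos l hlG).2
    by_cases hlF : l ∈ F
    · exact (hFpos l hlF).2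
    simp [List.count_eq_zero.mpr hlG, List.count_eq_zero.mpr hlF] at hl
  have hzero := hmin.sum_mul_marginal_eq_zero hcirc hsupp
  simp only [sub_mul, Finset.sum_sub_distrib, sum_count_mul_eq_sum_map] at hzero
  exact (sub_eq_zero.mp hzero).symm
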